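/- Let G be a unicyclic graph (a connected simple graph on n ≥ 3 vertices with n edges) with degree sequence d_1 ≥ d_2 ≥ ⋯ ≥ d_n. Then the constant vector (2, 2, …, 2) ∈ ℝ^n is majorized by (d_1, …, d_n), and (d_1, …, d_n) is majorized by the vector (n−1, 2, 2, 1, …, 1) (with n−3 trailing ones); i.e. 2k ≤ Σ_{i=1}^k d_i for every k = 1, …, n, and Σ_{i=1}^k d_i ≤ Σ_{i=1}^k x*_i for every k = 1, …, n, where x* = (n−1, 2, 2, 1^{n−3}). -/

import Mathlib

/-!
Since `G` has `n` edges, its degrees sum to `2n`. A nonincreasing sequence has prefix averages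
at least its total average `2`, which is the lower bound. Connectivity makes every degree at
least `1`, so the first `k` degrees sum to at most `2n - (n - k) = n + k`; this is the upper
bound for `k ≥ 3`. For `k = 1` it is `d₁ ≤ n - 1`, and for `k = 2` it is `d₁ + d₂ ≤ n + 1`,
because two distinct vertices share at most one edge.
-/

open Finset

namespace SimpleGraph

variable {V : Type*} [Fintype V] (G : SimpleGraph V) [DecidableRel G.Adj]

theorem ncard_neighborSet_eq_degree (v : V) : (G.neighborSet v).ncard = G.degree v := by
  rw [Set.ncard_eq_toFinset_card', ← card_neighborFinset_eq_degree, neighborFinset]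

theorem ncard_edgeSet_eq_card_edgeFinset : G.edgeSet.ncard = #G.edgeFinset :=
  Set.ncard_eq_toFinset_card' _

theorem degree_add_degree_le_card_edgeFinset_add_one [DecidableEq V] {u v : V} (huv : u ≠ v) :
    G.degree u + G.degree v ≤ #G.edgeFinset + 1 := by
  rw [← card_incidenceFinset_eq_degree, ← card_incidenceFinset_eq_degree,
    ← card_union_add_card_inter]
  gcongr ?_ + ?_
  · exact card_le_card (union_subset (G.incidenceFinset_subset u) (G.incidenceFinset_subset v))
  · calc #(G.incidenceFinset u ∩ G.incidenceFinset v) ≤ #{s(u, v)} := by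
          refine card_le_card fun e he => ?_
          rw [mem_inter, mem_incidenceFinset, mem_incidenceFinset] at he
          simpa using G.incidenceSet_inter_incidenceSet_subset huv he
      _ = 1 := card_singleton _

end SimpleGraph

section DegreeSequence

variable {d : ℕ → ℕ} {n k : ℕ}

theorem mul_sum_range_le_mul_sum_range_of_antitoneOn (hd : AntitoneOn d (Set.Iio n))
    (hk : k ≤ n) : k * ∑ i ∈ range n, d i ≤ n * ∑ i ∈ range k, d i := by
  -- Chebyshev's sum inequality for `d` and the indicator of `[0, k)`.
  have hmono : MonovaryOn d (fun i => if i < k then 1 else 0) (range n) := by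
    intro i hi j hj hij
    simp only [mem_coe, mem_range] at hi hj
    refine hd hj hi ?_
    dsimp only at hij
    split_ifs at hij <;> omega
  have hfilter : {i ∈ range n | i < k} = range k := by
    ext i
    simp only [mem_filter, mem_range]
    omega
  simpa [sum_ite, hfilter, mul_comm k] using hmono.sum_mul_sum_le_card_mul_sum

theorem two_mul_le_sum_range_of_antitoneOn (hd : AntitoneOn d (Set.Iio n))
    (hsum : ∑ i ∈ range n, d i = 2 * n) (hk : k ≤ n) : 2 * k ≤ ∑ i ∈ range k, d i := by
  rcases Nat.eq_zero_or_pos n with rfl | hn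
  · simp [Nat.le_zero.1 hk]
  refine Nat.le_of_mul_le_mul_left ?_ hn
  calc n * (2 * k) = k * ∑ i ∈ range n, d i := by rw [hsum]; ring
    _ ≤ n * ∑ i ∈ range k, d i := mul_sum_range_le_mul_sum_range_of_antitoneOn hd hk

theorem sum_range_add_sub_le_sum_range (hd : ∀ i < n, 1 ≤ d i) (hk : k ≤ n) :
    ∑ i ∈ range k, d i + (n - k) ≤ ∑ i ∈ range n, d i := by
  rw [← sum_range_add_sum_Ico d hk]
  gcongr
  simpa using card_nsmul_le_sum (Ico k n) d 1 fun i hi => hd i (mem_Ico.1 hi).2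

/-- The degree sequence `x* = (n - 1, 2, 2, 1, …, 1)` of a triangle with `n - 3` pendant
vertices at one of its corners. -/
def unicyclicExtremalDegree (n i : ℕ) : ℕ :=
  if i = 0 then n - 1 else if i < 3 then 2 else 1

theorem sum_range_unicyclicExtremalDegree (hn : 1 ≤ n) (hk : 3 ≤ k) :
    ∑ i ∈ range k, unicyclicExtremalDegree n i = n + k := by
  induction k, hk using Nat.le_induction with
  | base => grind [sum_range_succ, sum_range_zero, unicyclicExtremalDegree]
  | succ k hk ih =>
    rw [sum_range_succ, ih, unicyclicExtremalDegree, if_neg (by omega), if_neg (by omega)]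
    ring

theorem sum_range_le_sum_range_unicyclicExtremalDegree (hsum : ∑ i ∈ range n, d i = 2 * n)
    (hpos : ∀ i < n, 1 ≤ d i) (h₀ : d 0 ≤ n - 1) (h₀₁ : d 0 + d 1 ≤ n + 1) (hk₁ : 1 ≤ k)
    (hkn : k ≤ n) :
    ∑ i ∈ range k, d i ≤ ∑ i ∈ range k, unicyclicExtremalDegree n i := by
  obtain rfl | rfl | hk₃ : k = 1 ∨ k = 2 ∨ 3 ≤ k := by omega
  · simpa [unicyclicExtremalDegree] using h₀
  · grind [sum_range_succ, sum_range_zero, unicyclicExtremalDegree]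
  · have := sum_range_add_sub_le_sum_range hpos hkn
    rw [sum_range_unicyclicExtremalDegree (by omega) hk₃]
    omega

end DegreeSequence

/-- If `G` is a unicyclic graph on `n ≥ 3` vertices with nonincreasing degree
sequence `d`, then `(2, …, 2) ⊴ d ⊴ (n-1, 2, 2, 1^{n-3})` in the sense of
partial sums.  (0-indexed.) -/
theorem unicyclic_extremal_degree_sequences (n : ℕ) (hn : 3 ≤ n)
    (G : SimpleGraph (Fin n)) (hconn : G.Connected)
    (hedges : G.edgeSet.ncard = n)
    (d : ℕ → ℕ) (hmono : ∀ i j, i ≤ j → j < n → d j ≤ d i)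
    (hdeg : ∃ σ : Equiv.Perm (Fin n),
        ∀ i : Fin n, (G.neighborSet (σ i)).ncard = d (i : ℕ)) :
    (∀ k, 1 ≤ k → k ≤ n → 2 * k ≤ ∑ i ∈ Finset.range k, d i) ∧
    (∀ k, 1 ≤ k → k ≤ n →
      ∑ i ∈ Finset.range k, d i ≤
        ∑ i ∈ Finset.range k,
          (if i = 0 then n - 1 else if i < 3 then 2 else 1)) := by
  classical
  obtain ⟨σ, hσ⟩ := hdeg
  have hdσ (i : ℕ) (hi : i < n) : d i = G.degree (σ ⟨i, hi⟩) := by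
    rw [← hσ ⟨i, hi⟩, G.ncard_neighborSet_eq_degree]
  have hsum : ∑ i ∈ range n, d i = 2 * n :=
    calc ∑ i ∈ range n, d i = ∑ i : Fin n, G.degree (σ i) := by
          rw [← Fin.sum_univ_eq_sum_range]
          exact Fintype.sum_congr _ _ fun i => hdσ i i.2
      _ = 2 * n := by
          rw [Equiv.sum_comp σ (G.degree ·), G.sum_degrees_eq_twice_card_edges,
            ← G.ncard_edgeSet_eq_card_edgeFinset, hedges]
  have : Nontrivial (Fin n) := Fin.nontrivial_iff_two_le.2 (by omega)
  have hpos (i : ℕ) (hi : i < n) : 1 ≤ d i :=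
    (hdσ i hi).symm ▸ hconn.preconnected.degree_pos_of_nontrivial _
  have h₀ : d 0 ≤ n - 1 := by
    have := G.degree_lt_card_verts (σ ⟨0, by omega⟩)
    rw [Fintype.card_fin] at this
    have := hdσ 0 (by omega)
    omega
  have h₀₁ : d 0 + d 1 ≤ n + 1 := by
    have := G.degree_add_degree_le_card_edgeFinset_add_one
      (σ.injective.ne (show (⟨0, by omega⟩ : Fin n) ≠ ⟨1, by omega⟩ by simp))
    rw [← G.ncard_edgeSet_eq_card_edgeFinset, hedges] at this
    rwa [hdσ 0 (by omega), hdσ 1 (by omega)]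
  have hanti : AntitoneOn d (Set.Iio n) := fun i _ j hj hij => hmono i j hij hj
  exact ⟨fun k _ hkn => two_mul_le_sum_range_of_antitoneOn hanti hsum hkn,
    fun k hk₁ hkn =>
      sum_range_le_sum_range_unicyclicExtremalDegree hsum hpos h₀ h₀₁ hk₁ hkn⟩
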